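/- arXiv:math/9804009 — 2 statements merged into one kernel-verified Lean document; each statement's English description precedes it below -/
import Mathlib

section
/- There exists a row vector w ∈ ℝ³ with all coordinates strictly positive such that wᵀ·A = μ·wᵀ, where μ is the unique real root of t³ − 4t² + 3t − 1; i.e. the transpose of A also admits a strictly positive eigenvector for μ. -/
/-! The cubic t³ - 4t² + 3t - 1 = t(t - 1)(t - 3) - 1 is negative on (-∞, 1], so μ > 1. Solving the
last two columns of w A = μ w with w₂ = μ gives w = ((μ - 1)², μ(μ - 1), μ), which is then positive,
and the first column holds exactly because μ is a root of the cubic. -/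

lemma one_lt_of_cubic_eq_zero {μ : ℝ} (hμ : μ ^ 3 - 4 * μ ^ 2 + 3 * μ - 1 = 0) : 1 < μ := by
  by_contra! h
  have h1 : 0 ≤ 1 - μ := by linarith
  nlinarith [sq_nonneg μ, mul_nonneg (mul_nonneg h1 h1) h1]

def perronLeftVector (μ : ℝ) : Fin 3 → ℝ :=
  ![(μ - 1) ^ 2, μ * (μ - 1), μ]

lemma perronLeftVector_pos {μ : ℝ} (hμ : 1 < μ) (i : Fin 3) : 0 < perronLeftVector μ i := by
  have hμ₀ : 0 < μ := by linarith
  have hμ₁ : 0 < μ - 1 := by linarith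
  fin_cases i
  · exact pow_pos hμ₁ 2
  · exact mul_pos hμ₀ hμ₁
  · exact hμ₀

lemma vecMul_perronLeftVector {μ : ℝ} (hμ : μ ^ 3 - 4 * μ ^ 2 + 3 * μ - 1 = 0) :
    Matrix.vecMul (perronLeftVector μ) (!![1, 1, 0; 1, 2, 1; 1, 1, 1] : Matrix (Fin 3) (Fin 3) ℝ) =
      μ • perronLeftVector μ := by
  ext j
  fin_cases j <;>
    simp only [Matrix.vecMul, dotProduct, perronLeftVector, Fin.sum_univ_three, Fin.isValue,
      Fin.zero_eta, Fin.mk_one, Fin.reduceFinMk, Matrix.of_apply, Matrix.cons_val',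
      Matrix.cons_val, Matrix.cons_val_zero, Matrix.cons_val_one, Matrix.cons_val_fin_one,
      mul_zero, mul_one, zero_add, Pi.smul_apply, smul_eq_mul]
  · linear_combination -hμ
  · linear_combination -hμ
  · ring

theorem positive_left_eigenvector (μ : ℝ) (hμ : μ ^ 3 - 4 * μ ^ 2 + 3 * μ - 1 = 0) :
    ∃ w : Fin 3 → ℝ, (∀ i, 0 < w i) ∧
      Matrix.vecMul w (!![1, 1, 0; 1, 2, 1; 1, 1, 1] : Matrix (Fin 3) (Fin 3) ℝ) = μ • w :=
  ⟨perronLeftVector μ, perronLeftVector_pos (one_lt_of_cubic_eq_zero hμ),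
    vecMul_perronLeftVector hμ⟩
end

section
/- For every nonzero integer vector v ∈ ℤ³, the sequence (Aⁿ·v)ₙ∈ℕ is unbounded in ℝ³, where A = [[1,1,0],[1,2,1],[1,1,1]]. -/
/-!
A bounded orbit of an integer vector takes only finitely many values, so two iterates agree, and
since `A` is unimodular the vector itself is periodic: `Aᵏ v = v` for some `k ≥ 1`. Pairing with a
left eigenvector `u` for the real eigenvalue `μ > 1` gives `u ⬝ v = μᵏ (u ⬝ v)`, so `u ⬝ v = 0`.
The entries of `u` lie in `ℚ + ℚμ + ℚμ²`, and `1, μ, μ²` are linearly independent over `ℚ` because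
the characteristic polynomial `X³ - 4X² + 3X - 1` has no rational root, hence is irreducible; so
`u ⬝ v = 0` forces `v = 0`.
-/

open Matrix Polynomial

section

variable {ι : Type*} [Fintype ι] [DecidableEq ι]

omit [DecidableEq ι] in
theorem Pi.norm_intCast (x : ι → ℤ) : ‖fun i => (x i : ℝ)‖ = ‖x‖ := by
  simp only [Pi.norm_def]
  congr with b

theorem Matrix.map_intCast_pow_mulVec (A : Matrix ι ι ℤ) (v : ι → ℤ) (n : ℕ) :
    A.map ((↑) : ℤ → ℝ) ^ n *ᵥ (fun i => (v i : ℝ)) = fun i => ((A ^ n *ᵥ v) i : ℝ) := by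
  have hpow := Matrix.map_pow A (Int.castRingHom ℝ) n
  rw [Int.coe_castRingHom] at hpow
  ext i
  rw [← hpow]
  exact ((Int.castRingHom ℝ).map_mulVec (A ^ n) v i).symm

theorem Matrix.exists_pow_mulVec_eq_self_of_norm_le {A : Matrix ι ι ℤ} (hA : IsUnit A)
    {v : ι → ℤ} {C : ℝ} (h : ∀ n, ‖A ^ n *ᵥ v‖ ≤ C) : ∃ k ≠ 0, A ^ k *ᵥ v = v := by
  have hfin : (Metric.closedBall (0 : ι → ℤ) C).Finite :=
    (isCompact_closedBall 0 C).finite_of_discrete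
  obtain ⟨m, n, hmn, heq⟩ := hfin.exists_lt_map_eq_of_forall_mem
    (f := fun n => A ^ n *ᵥ v) fun n => mem_closedBall_zero_iff.2 (h n)
  refine ⟨n - m, by omega, mulVec_injective_of_isUnit (hA.pow m) ?_⟩
  simp only [mulVec_mulVec, ← pow_add, Nat.add_sub_cancel' hmn.le]
  exact heq.symm

theorem Matrix.dotProduct_pow_mulVec_of_vecMul_eq_smul {R : Type*} [CommSemiring R]
    {M : Matrix ι ι R} {u : ι → R} {μ : R} (hu : u ᵥ* M = μ • u) (k : ℕ) (w : ι → R) :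
    u ⬝ᵥ (M ^ k *ᵥ w) = μ ^ k * (u ⬝ᵥ w) := by
  induction k with
  | zero => simp
  | succ k ih =>
    rw [pow_succ', ← mulVec_mulVec, dotProduct_mulVec, hu, smul_dotProduct, ih, smul_eq_mul,
      pow_succ', mul_assoc]

end

theorem irreducible_cubic : Irreducible (X ^ 3 - 4 * X ^ 2 + 3 * X - 1 : ℚ[X]) := by
  have hdeg : (X ^ 3 - 4 * X ^ 2 + 3 * X - 1 : ℚ[X]).natDegree = 3 := by compute_degree!
  refine irreducible_of_degree_le_three_of_not_isRoot (by simp [hdeg]) fun s hs => ?_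
  have : (X ^ 3 - 4 * X ^ 2 + 3 * X - 1 : ℤ[X]).Monic := by monicity!
  obtain ⟨m, rfl⟩ := isInteger_of_is_root_of_monic this (r := s) (by simpa [map_ofNat] using hs)
  have hm : m * (m ^ 2 - 4 * m + 3) = 1 := by
    have : (m : ℚ) ^ 3 - 4 * m ^ 2 + 3 * m - 1 = 0 := by simpa using hs
    have : m ^ 3 - 4 * m ^ 2 + 3 * m - 1 = 0 := by exact_mod_cast this
    linear_combination this
  rcases Int.eq_one_or_neg_one_of_mul_eq_one hm with rfl | rfl <;> norm_num at hm

theorem exists_one_lt_root_cubic : ∃ μ : ℝ, 1 < μ ∧ μ ^ 3 - 4 * μ ^ 2 + 3 * μ - 1 = 0 := by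
  obtain ⟨μ, ⟨h1, -⟩, hμ⟩ : ∃ μ ∈ Set.Icc (1 : ℝ) 4, μ ^ 3 - 4 * μ ^ 2 + 3 * μ - 1 = 0 :=
    intermediate_value_Icc (by norm_num) (by fun_prop) (by norm_num)
  refine ⟨μ, h1.lt_of_ne ?_, hμ⟩
  rintro rfl
  norm_num at hμ

theorem linearIndependent_pow_of_cubic {μ : ℝ} (hμ : μ ^ 3 - 4 * μ ^ 2 + 3 * μ - 1 = 0) :
    LinearIndependent ℚ fun i : Fin 3 => μ ^ (i : ℕ) := by
  have hmin : minpoly ℚ μ = X ^ 3 - 4 * X ^ 2 + 3 * X - 1 :=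
    (minpoly.eq_of_irreducible_of_monic irreducible_cubic (by simpa [map_ofNat] using hμ)
      (by monicity!)).symm
  have hdeg : (minpoly ℚ μ).natDegree = 3 := by rw [hmin]; compute_degree!
  have := linearIndependent_pow (K := ℚ) μ
  rwa [hdeg] at this

def pisotMatrix : Matrix (Fin 3) (Fin 3) ℤ := !![1, 1, 0; 1, 2, 1; 1, 1, 1]

theorem isUnit_pisotMatrix : IsUnit pisotMatrix := by
  rw [isUnit_iff_isUnit_det, pisotMatrix, det_fin_three]
  decide

theorem vecMul_pisotMatrix_eq_smul {μ : ℝ} (hμ : μ ^ 3 - 4 * μ ^ 2 + 3 * μ - 1 = 0) :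
    ![(μ - 1) ^ 2, μ * (μ - 1), μ] ᵥ* pisotMatrix.map (↑) = μ • ![(μ - 1) ^ 2, μ * (μ - 1), μ] := by
  ext i
  fin_cases i <;>
    simp only [vecMul, dotProduct, pisotMatrix, Fin.sum_univ_three, Fin.zero_eta, Fin.mk_one,
      Fin.reduceFinMk, Fin.isValue, map_apply, of_apply, cons_val', cons_val_zero, cons_val_one,
      cons_val, cons_val_fin_one, Int.cast_zero, Int.cast_one, Int.cast_ofNat, mul_zero, mul_one,
      zero_add, Pi.smul_apply, smul_eq_mul]
  · linear_combination -hμ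
  · linear_combination -hμ
  · ring

theorem eq_zero_of_dotProduct_eq_zero_of_cubic {μ : ℝ} (hμ : μ ^ 3 - 4 * μ ^ 2 + 3 * μ - 1 = 0)
    {w : Fin 3 → ℤ} (h : ![(μ - 1) ^ 2, μ * (μ - 1), μ] ⬝ᵥ (fun i => (w i : ℝ)) = 0) : w = 0 := by
  set c : Fin 3 → ℤ := ![w 0, -2 * w 0 - w 1 + w 2, w 0 + w 1]
  have hcomb : ∑ i, (c i : ℚ) • μ ^ (i : ℕ) = 0 := by
    simp only [c, dotProduct, Fin.sum_univ_three, Fin.isValue, cons_val_zero, cons_val_one,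
      cons_val, Rat.smul_def, Rat.cast_intCast, Fin.coe_ofNat_eq_mod, Nat.zero_mod, Nat.one_mod,
      Nat.mod_succ, pow_zero, pow_one, mul_one, Int.cast_add, Int.cast_sub, Int.cast_neg,
      Int.cast_mul, Int.cast_ofNat] at h ⊢
    linear_combination h
  have hc i : c i = 0 := Int.cast_eq_zero.1 <|
    Fintype.linearIndependent_iff.1 (linearIndependent_pow_of_cubic hμ) _ hcomb i
  have h0 := hc 0; have h1 := hc 1; have h2 := hc 2
  simp only [c, cons_val_zero, cons_val_one, cons_val] at h0 h1 h2
  have hw1 : w 1 = 0 := by omega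
  have hw2 : w 2 = 0 := by omega
  ext i; fin_cases i <;> simp [h0, hw1, hw2]

theorem eq_zero_of_pisotMatrix_pow_mulVec_eq_self {k : ℕ} (hk : k ≠ 0) {w : Fin 3 → ℤ}
    (hw : pisotMatrix ^ k *ᵥ w = w) : w = 0 := by
  obtain ⟨μ, hμ1, hμ⟩ := exists_one_lt_root_cubic
  have hdot := dotProduct_pow_mulVec_of_vecMul_eq_smul (vecMul_pisotMatrix_eq_smul hμ) k
    (fun i => (w i : ℝ))
  rw [map_intCast_pow_mulVec, hw] at hdot
  have hμk : μ ^ k ≠ 1 := (pow_eq_one_iff_of_nonneg (by positivity) hk).not.2 hμ1.ne'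
  refine eq_zero_of_dotProduct_eq_zero_of_cubic hμ ?_
  by_contra hne
  exact hμk ((mul_eq_right₀ hne).1 hdot.symm)

theorem iterates_unbounded (v : Fin 3 → ℤ) (hv : v ≠ 0) :
    ¬ ∃ C : ℝ, ∀ n : ℕ,
      ‖Matrix.mulVec ((!![1, 1, 0; 1, 2, 1; 1, 1, 1] : Matrix (Fin 3) (Fin 3) ℝ) ^ n)
        (fun i => (v i : ℝ))‖ ≤ C := by
  rintro ⟨C, hC⟩
  have hA : (!![1, 1, 0; 1, 2, 1; 1, 1, 1] : Matrix (Fin 3) (Fin 3) ℝ) = pisotMatrix.map (↑) := by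
    ext i j
    fin_cases i <;> fin_cases j <;> simp [pisotMatrix]
  have hbdd n : ‖pisotMatrix ^ n *ᵥ v‖ ≤ C := by
    simpa only [hA, map_intCast_pow_mulVec, Pi.norm_intCast] using hC n
  obtain ⟨k, hk, hkv⟩ := exists_pow_mulVec_eq_self_of_norm_le isUnit_pisotMatrix hbdd
  exact hv (eq_zero_of_pisotMatrix_pow_mulVec_eq_self hk hkv)
end
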